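/- arXiv:1603.09050 — 7 statements merged into one kernel-verified Lean document; each statement's English description precedes it below -/
import Mathlib

section
/- Suppose the utility f_p is Lipschitz continuous in the prior with constant L and bounded by M. If A is an average-case α-approximate algorithm (0 < α ≤ 1), i.e., for every prior p, F(p, A(p)) ≥ α·max_π F(p,π), then for any true prior p0 and perturbed prior p1: F(p0, A(p1)) ≥ α·max_π F(p0,π) − (α+1)(L+M)·‖p1−p0‖. -/
open Finset

/-!
Perturbing the prior from `p1` to `p0` moves the objective of every policy by at most
`(L + M) ‖p1 - p0‖₁`: the weights contribute `M ‖p1 - p0‖₁` and the change of utility at most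
`L ‖p1 - p0‖₁`, averaged under `p1`. Hence the optimum moves by at most as much, and the
`α`-approximation guarantee at `p1` transfers to `p0`, losing this amount once for the policy
`A p1` and `α` times for the optimum.
-/

theorem Finset.sup'_sub_sup'_le {ι : Type*} {s : Finset ι} (hs : s.Nonempty) {u v : ι → ℝ}
    {ε : ℝ} (h : ∀ i ∈ s, u i - v i ≤ ε) : s.sup' hs u - s.sup' hs v ≤ ε := by
  rw [sub_le_iff_le_add]
  refine Finset.sup'_le hs u fun i hi => ?_
  linarith [h i hi, Finset.le_sup' v hi]

theorem abs_sum_mul_sub_sum_mul_le {ι : Type*} (s : Finset ι) {p q g k : ι → ℝ} {M δ : ℝ}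
    (hg : ∀ i ∈ s, |g i| ≤ M) (hq : ∀ i ∈ s, 0 ≤ q i) (hgk : ∀ i ∈ s, |g i - k i| ≤ δ) :
    |∑ i ∈ s, p i * g i - ∑ i ∈ s, q i * k i| ≤
      M * ∑ i ∈ s, |p i - q i| + δ * ∑ i ∈ s, q i := by
  have hsplit : ∑ i ∈ s, p i * g i - ∑ i ∈ s, q i * k i =
      ∑ i ∈ s, ((p i - q i) * g i + q i * (g i - k i)) := by
    rw [← Finset.sum_sub_distrib]
    exact Finset.sum_congr rfl fun i _ => by ring
  rw [hsplit, Finset.mul_sum, Finset.mul_sum, ← Finset.sum_add_distrib]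
  refine (Finset.abs_sum_le_sum_abs _ _).trans (Finset.sum_le_sum fun i hi => ?_)
  refine (abs_add_le _ _).trans (add_le_add ?_ ?_)
  · rw [abs_mul, mul_comm M]
    exact mul_le_mul_of_nonneg_left (hg i hi) (abs_nonneg _)
  · rw [abs_mul, abs_of_nonneg (hq i hi), mul_comm δ]
    exact mul_le_mul_of_nonneg_left (hgk i hi) (hq i hi)

theorem le_approx_of_abs_sub_le {P : Type*} [Fintype P] [Nonempty P] {F₀ F₁ : P → ℝ}
    {α ε : ℝ} (hα : 0 ≤ α) (hclose : ∀ π, |F₀ π - F₁ π| ≤ ε) {a : P}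
    (ha : F₁ a ≥ α * univ.sup' univ_nonempty F₁) :
    F₀ a ≥ α * univ.sup' univ_nonempty F₀ - (α + 1) * ε := by
  have hsup : univ.sup' univ_nonempty F₀ - univ.sup' univ_nonempty F₁ ≤ ε :=
    Finset.sup'_sub_sup'_le _ fun π _ => (abs_le.mp (hclose π)).2
  have hαsup := mul_le_mul_of_nonneg_left hsup hα
  linarith [(abs_le.mp (hclose a)).1]

theorem stmt2_general {H X P : Type*} [Fintype H] [Fintype P] [Nonempty P]
    (f : (H → ℝ) → Finset X → H → ℝ) (L M α : ℝ)
    (pol : P → H → Finset X)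
    (hα : 0 < α)
    (hNonneg : ∀ (p : H → ℝ), (∀ h, 0 ≤ p h) → (∑ h, p h) = 1 →
      ∀ (S : Finset X) (h : H), 0 ≤ f p S h)
    (hLip : ∀ (p p' : H → ℝ), (∀ h, 0 ≤ p h) → (∑ h, p h) = 1 →
      (∀ h, 0 ≤ p' h) → (∑ h, p' h) = 1 →
      ∀ (S : Finset X) (h : H),
        |f p S h - f p' S h| ≤ L * ∑ h', |p h' - p' h'|)
    (hBound : ∀ (p : H → ℝ), (∀ h, 0 ≤ p h) → (∑ h, p h) = 1 →
      ∀ (S : Finset X) (h : H), f p S h ≤ M)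
    (A : (H → ℝ) → P)
    (hA : ∀ (p : H → ℝ), (∀ h, 0 ≤ p h) → (∑ h, p h) = 1 →
      (∑ h, p h * f p (pol (A p) h) h) ≥
        α * Finset.univ.sup' Finset.univ_nonempty
          (fun π => ∑ h, p h * f p (pol π h) h))
    (p0 p1 : H → ℝ)
    (hp0 : ∀ h, 0 ≤ p0 h) (hp0sum : (∑ h, p0 h) = 1)
    (hp1 : ∀ h, 0 ≤ p1 h) (hp1sum : (∑ h, p1 h) = 1) :
    (∑ h, p0 h * f p0 (pol (A p1) h) h) ≥
      α * Finset.univ.sup' Finset.univ_nonempty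
          (fun π => ∑ h, p0 h * f p0 (pol π h) h)
      - (α + 1) * (L + M) * ∑ h, |p1 h - p0 h| := by
  have hdist : ∑ h, |p0 h - p1 h| = ∑ h, |p1 h - p0 h| :=
    Finset.sum_congr rfl fun h _ => abs_sub_comm _ _
  have hclose : ∀ π, |∑ h, p0 h * f p0 (pol π h) h - ∑ h, p1 h * f p1 (pol π h) h| ≤
      (L + M) * ∑ h, |p1 h - p0 h| := by
    intro π
    have hf : ∀ h ∈ univ, |f p0 (pol π h) h| ≤ M := fun h _ => by
      rw [abs_of_nonneg (hNonneg p0 hp0 hp0sum _ _)]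
      exact hBound p0 hp0 hp0sum _ _
    have := abs_sum_mul_sub_sum_mul_le univ (p := p0) hf (fun h _ => hp1 h)
      (fun h _ => hLip p0 p1 hp0 hp0sum hp1 hp1sum (pol π h) h)
    rw [hp1sum, hdist] at this
    linarith
  rw [mul_assoc]
  exact le_approx_of_abs_sub_le hα.le hclose (hA p1 hp1 hp1sum)

theorem stmt2 {H X P : Type*} [Fintype H] [Fintype X] [Fintype P] [Nonempty P]
    (f : (H → ℝ) → Finset X → H → ℝ) (L M α : ℝ)
    (pol : P → H → Finset X)
    (hα : 0 < α) (hα1 : α ≤ 1)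
    (hNonneg : ∀ (p : H → ℝ), (∀ h, 0 ≤ p h) → (∑ h, p h) = 1 →
      ∀ (S : Finset X) (h : H), 0 ≤ f p S h)
    (hLip : ∀ (p p' : H → ℝ), (∀ h, 0 ≤ p h) → (∑ h, p h) = 1 →
      (∀ h, 0 ≤ p' h) → (∑ h, p' h) = 1 →
      ∀ (S : Finset X) (h : H),
        |f p S h - f p' S h| ≤ L * ∑ h', |p h' - p' h'|)
    (hBound : ∀ (p : H → ℝ), (∀ h, 0 ≤ p h) → (∑ h, p h) = 1 →
      ∀ (S : Finset X) (h : H), f p S h ≤ M)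
    (A : (H → ℝ) → P)
    (hA : ∀ (p : H → ℝ), (∀ h, 0 ≤ p h) → (∑ h, p h) = 1 →
      (∑ h, p h * f p (pol (A p) h) h) ≥
        α * Finset.univ.sup' Finset.univ_nonempty
          (fun π => ∑ h, p h * f p (pol π h) h))
    (p0 p1 : H → ℝ)
    (hp0 : ∀ h, 0 ≤ p0 h) (hp0sum : (∑ h, p0 h) = 1)
    (hp1 : ∀ h, 0 ≤ p1 h) (hp1sum : (∑ h, p1 h) = 1) :
    (∑ h, p0 h * f p0 (pol (A p1) h) h) ≥
      α * Finset.univ.sup' Finset.univ_nonempty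
          (fun π => ∑ h, p0 h * f p0 (pol π h) h)
      - (α + 1) * (L + M) * ∑ h, |p1 h - p0 h| :=
  stmt2_general f L M α pol hα hNonneg hLip hBound A hA p0 p1 hp0 hp0sum hp1 hp1sum
end

section
/- If A is an algorithm satisfying F(p, A(p)) ≥ (1−1/e)·max_π F(p,π) for every prior p (as the maximum Gibbs error algorithm does for the version space reduction utility), then for any true prior p0 and perturbed prior p1: F(p0, A(p1)) ≥ (1−1/e)·max_π F(p0,π) − (4 − 2/e)·‖p1−p0‖. -/
/-!
Perturbing the prior by `d = ‖p₁ - p₀‖₁` moves every version-space utility `f_p(S, h)` by at most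
`d`, hence every expected utility `F(p, π)` by at most `2d` (`d` from reweighting a utility bounded
by `1`, `d` from the utility itself). An `α`-approximate maximiser for `p₁` is then an
`α`-approximate maximiser for `p₀` up to the additive loss `(1 + α) · 2d`, which for
`α = 1 - 1/e` is `(4 - 2/e) · d`.
-/

open Finset

theorem Finset.sup'_le_sup'_add {ι : Type*} {s : Finset ι} (hs : s.Nonempty) {F₀ F₁ : ι → ℝ}
    {ε : ℝ} (hF : ∀ i ∈ s, F₀ i ≤ F₁ i + ε) : s.sup' hs F₀ ≤ s.sup' hs F₁ + ε :=
  Finset.sup'_le hs F₀ fun i hi => (hF i hi).trans (by gcongr; exact le_sup' F₁ hi)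

theorem approx_sup'_of_approx_sup'_of_abs_sub_le {ι : Type*} {s : Finset ι} (hs : s.Nonempty)
    {F₀ F₁ : ι → ℝ} {c ε : ℝ} (hc : 0 ≤ c) (hF : ∀ i, |F₀ i - F₁ i| ≤ ε) {a : ι}
    (ha : c * s.sup' hs F₁ ≤ F₁ a) : c * s.sup' hs F₀ - (1 + c) * ε ≤ F₀ a := by
  have hsup : s.sup' hs F₀ ≤ s.sup' hs F₁ + ε :=
    Finset.sup'_le_sup'_add hs fun i _ => by linarith [(abs_le.mp (hF i)).2]
  have hsup_scaled : c * s.sup' hs F₀ ≤ c * (s.sup' hs F₁ + ε) := by gcongr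
  linarith [(abs_le.mp (hF a)).1]

theorem Finset.sum_le_one_of_sum_univ_eq_one {ι : Type*} [Fintype ι] {p : ι → ℝ}
    (hp : ∀ i, 0 ≤ p i) (hp₁ : ∑ i, p i = 1) (T : Finset ι) : ∑ i ∈ T, p i ≤ 1 :=
  (sum_le_univ_sum_of_nonneg hp).trans_eq hp₁

theorem Finset.abs_sum_sub_sum_le_sum_univ_abs_sub {ι : Type*} [Fintype ι] (p q : ι → ℝ)
    (T : Finset ι) : |∑ i ∈ T, p i - ∑ i ∈ T, q i| ≤ ∑ i, |p i - q i| := by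
  rw [← sum_sub_distrib]
  exact (abs_sum_le_sum_abs _ _).trans (sum_le_univ_sum_of_nonneg fun _ => abs_nonneg _)

theorem abs_sum_mul_sub_sum_mul_le_s4 {ι : Type*} [Fintype ι] {p₀ p₁ u₀ u₁ : ι → ℝ} {δ : ℝ}
    (hp₁ : ∀ i, 0 ≤ p₁ i) (hp₁_sum : ∑ i, p₁ i = 1) (hu₀ : ∀ i, |u₀ i| ≤ 1)
    (hu : ∀ i, |u₀ i - u₁ i| ≤ δ) :
    |∑ i, p₀ i * u₀ i - ∑ i, p₁ i * u₁ i| ≤ ∑ i, |p₁ i - p₀ i| + δ := by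
  have hsplit : ∑ i, p₀ i * u₀ i - ∑ i, p₁ i * u₁ i
      = ∑ i, ((p₀ i - p₁ i) * u₀ i + p₁ i * (u₀ i - u₁ i)) := by
    rw [← sum_sub_distrib]; congr 1; funext i; ring
  have hterm : ∀ i, |(p₀ i - p₁ i) * u₀ i + p₁ i * (u₀ i - u₁ i)| ≤ |p₁ i - p₀ i| + p₁ i * δ := by
    intro i
    calc |(p₀ i - p₁ i) * u₀ i + p₁ i * (u₀ i - u₁ i)|
        ≤ |p₁ i - p₀ i| * |u₀ i| + p₁ i * |u₀ i - u₁ i| := by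
          rw [abs_sub_comm (p₁ i), ← abs_mul, ← abs_of_nonneg (hp₁ i), ← abs_mul,
            abs_of_nonneg (hp₁ i)]
          exact abs_add_le _ _
      _ ≤ |p₁ i - p₀ i| * 1 + p₁ i * δ := by
          gcongr
          · exact hu₀ i
          · exact hp₁ i
          · exact hu i
      _ = |p₁ i - p₀ i| + p₁ i * δ := by ring
  calc |∑ i, p₀ i * u₀ i - ∑ i, p₁ i * u₁ i|
      ≤ ∑ i, (|p₁ i - p₀ i| + p₁ i * δ) := by
        rw [hsplit]; exact (abs_sum_le_sum_abs _ _).trans (sum_le_sum fun i _ => hterm i)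
    _ = ∑ i, |p₁ i - p₀ i| + δ := by rw [sum_add_distrib, ← sum_mul, hp₁_sum, one_mul]

section VersionSpace

variable {X Y : Type*} [Fintype X] [Fintype Y] [DecidableEq X] [DecidableEq Y]

/-- `f_p(S, h) = 1 - p[h(S); S]`. -/
def versionSpaceUtility (p : (X → Y) → ℝ) (S : Finset X) (h : X → Y) : ℝ :=
  1 - ∑ h' ∈ Finset.univ.filter (fun h' : X → Y => ∀ s ∈ S, h' s = h s), p h'

theorem abs_versionSpaceUtility_le_one {p : (X → Y) → ℝ} (hp : ∀ h, 0 ≤ p h)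
    (hp_sum : ∑ h, p h = 1) (S : Finset X) (h : X → Y) : |versionSpaceUtility p S h| ≤ 1 := by
  have hmass_nonneg := sum_nonneg fun h' (_ : h' ∈ univ.filter fun h' : X → Y => ∀ s ∈ S, h' s = h s)
    => hp h'
  have hmass_le_one := sum_le_one_of_sum_univ_eq_one hp hp_sum
    (univ.filter fun h' : X → Y => ∀ s ∈ S, h' s = h s)
  rw [versionSpaceUtility, abs_le]
  constructor <;> linarith

theorem abs_versionSpaceUtility_sub_le (p₀ p₁ : (X → Y) → ℝ) (S : Finset X) (h : X → Y) :
    |versionSpaceUtility p₀ S h - versionSpaceUtility p₁ S h| ≤ ∑ h', |p₁ h' - p₀ h'| := by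
  simpa only [versionSpaceUtility, sub_sub_sub_cancel_left]
    using abs_sum_sub_sum_le_sum_univ_abs_sub p₁ p₀ _

theorem abs_expected_versionSpaceUtility_sub_le {p₀ p₁ : (X → Y) → ℝ} (hp₀ : ∀ h, 0 ≤ p₀ h)
    (hp₀_sum : ∑ h, p₀ h = 1) (hp₁ : ∀ h, 0 ≤ p₁ h) (hp₁_sum : ∑ h, p₁ h = 1)
    (g : (X → Y) → Finset X) :
    |∑ h, p₀ h * versionSpaceUtility p₀ (g h) h - ∑ h, p₁ h * versionSpaceUtility p₁ (g h) h|
      ≤ 2 * ∑ h, |p₁ h - p₀ h| := by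
  have := abs_sum_mul_sub_sum_mul_le_s4 (p₀ := p₀) hp₁ hp₁_sum
    (fun h => abs_versionSpaceUtility_le_one hp₀ hp₀_sum (g h) h)
    (fun h => abs_versionSpaceUtility_sub_le p₀ p₁ (g h) h)
  linarith

end VersionSpace

theorem stmt4 {X Y P : Type*} [Fintype X] [Fintype Y] [DecidableEq X] [DecidableEq Y]
    [Fintype P] [Nonempty P]
    (pol : P → (X → Y) → Finset X)
    (f : ((X → Y) → ℝ) → Finset X → (X → Y) → ℝ)
    (hf : ∀ p S h, f p S h =
      1 - ∑ h' ∈ Finset.univ.filter (fun h' : X → Y => ∀ s ∈ S, h' s = h s), p h')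
    (A : ((X → Y) → ℝ) → P)
    (hA : ∀ (p : (X → Y) → ℝ), (∀ h, 0 ≤ p h) → (∑ h, p h) = 1 →
      (∑ h, p h * f p (pol (A p) h) h) ≥
        (1 - 1 / Real.exp 1) * Finset.univ.sup' Finset.univ_nonempty
          (fun π => ∑ h, p h * f p (pol π h) h))
    (p0 p1 : (X → Y) → ℝ)
    (hp0 : ∀ h, 0 ≤ p0 h) (hp0sum : (∑ h, p0 h) = 1)
    (hp1 : ∀ h, 0 ≤ p1 h) (hp1sum : (∑ h, p1 h) = 1) :
    (∑ h, p0 h * f p0 (pol (A p1) h) h) ≥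
      (1 - 1 / Real.exp 1) * Finset.univ.sup' Finset.univ_nonempty
          (fun π => ∑ h, p0 h * f p0 (pol π h) h)
      - (4 - 2 / Real.exp 1) * ∑ h, |p1 h - p0 h| := by
  obtain rfl : f = versionSpaceUtility := by funext p S h; exact hf p S h
  have hc : 0 ≤ 1 - 1 / Real.exp 1 := by
    rw [sub_nonneg, div_le_one (Real.exp_pos 1)]
    exact Real.one_le_exp zero_le_one
  have hloss : (4 - 2 / Real.exp 1) * ∑ h, |p1 h - p0 h|
      = (1 + (1 - 1 / Real.exp 1)) * (2 * ∑ h, |p1 h - p0 h|) := by ring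
  rw [hloss]
  exact approx_sup'_of_approx_sup'_of_abs_sub_le univ_nonempty hc
    (fun π => abs_expected_versionSpaceUtility_sub_le hp0 hp0sum hp1 hp1sum (pol π))
    (hA p1 hp1 hp1sum)
end

section
/- Suppose f_p is Lipschitz continuous in the prior with constant L. If A is a worst-case α-approximate algorithm (for every prior p, W(p, A(p)) ≥ α·max_π W(p,π)), then for any true prior p0 and perturbed prior p1: W(p0, A(p1)) ≥ α·max_π W(p0,π) − (α+1)·L·‖p1−p0‖. -/
/-!
Write `u` and `v` for the utilities under the true prior `p0` and the perturbed prior `p1`;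
by the Lipschitz hypothesis they differ by at most `δ = L‖p1 - p0‖₁` everywhere, so every
worst-case value, and the optimal one, moves by at most `δ` between the two priors. Hence
`W(p0, A p1) ≥ W(p1, A p1) - δ ≥ α · max W(p1, ·) - δ ≥ α · (max W(p0, ·) - δ) - δ`.
-/

open Finset

namespace Finset

variable {ι : Type*} {s : Finset ι} {f g : ι → ℝ} {δ : ℝ}

theorem inf'_sub_le_inf'_of_le_add (hs : s.Nonempty) (hfg : ∀ i ∈ s, f i ≤ g i + δ) :
    s.inf' hs f - δ ≤ s.inf' hs g :=
  le_inf' hs g fun i hi => by linarith [inf'_le f hi, hfg i hi]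

theorem sup'_sub_le_sup'_of_le_add (hs : s.Nonempty) (hfg : ∀ i ∈ s, f i ≤ g i + δ) :
    s.sup' hs f - δ ≤ s.sup' hs g :=
  sub_le_iff_le_add.mpr <| sup'_le hs f fun i hi => by linarith [le_sup' g hi, hfg i hi]

end Finset

noncomputable def maxMin {P H : Type*} [Fintype P] [Nonempty P] [Fintype H] [Nonempty H]
    (u : P → H → ℝ) : ℝ :=
  univ.sup' univ_nonempty fun π => univ.inf' univ_nonempty (u π)

section Stability

variable {P H : Type*} [Fintype P] [Nonempty P] [Fintype H] [Nonempty H]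

theorem maxMin_sub_le_maxMin {u v : P → H → ℝ} {δ : ℝ} (huv : ∀ π h, u π h ≤ v π h + δ) :
    maxMin u - δ ≤ maxMin v :=
  sup'_sub_le_sup'_of_le_add _ fun π _ =>
    inf'_sub_le_inf'_of_le_add _ (fun h _ => huv π h) |> sub_le_iff_le_add.mp

theorem approx_maxMin_of_abs_sub_le {u v : P → H → ℝ} {δ α : ℝ} (hα : 0 ≤ α)
    (huv : ∀ π h, |u π h - v π h| ≤ δ) {a : P}
    (ha : α * maxMin v ≤ univ.inf' univ_nonempty (v a)) :
    α * maxMin u - (α + 1) * δ ≤ univ.inf' univ_nonempty (u a) := by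
  have hvu : univ.inf' univ_nonempty (v a) - δ ≤ univ.inf' univ_nonempty (u a) :=
    inf'_sub_le_inf'_of_le_add _ fun h _ => by linarith [(abs_le.mp (huv a h)).1]
  have hopt : maxMin u - δ ≤ maxMin v :=
    maxMin_sub_le_maxMin fun π h => by linarith [(abs_le.mp (huv π h)).2]
  linarith [mul_le_mul_of_nonneg_left hopt hα]

end Stability

theorem stmt6_general {H X P : Type*} [Fintype H] [Nonempty H] [Fintype P] [Nonempty P]
    (f : (H → ℝ) → Finset X → H → ℝ) (L α : ℝ)
    (pol : P → H → Finset X)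
    (hα : 0 < α)
    (hLip : ∀ (p p' : H → ℝ), (∀ h, 0 ≤ p h) → (∑ h, p h) = 1 →
      (∀ h, 0 ≤ p' h) → (∑ h, p' h) = 1 →
      ∀ (S : Finset X) (h : H),
        |f p S h - f p' S h| ≤ L * ∑ h', |p h' - p' h'|)
    (A : (H → ℝ) → P)
    (hA : ∀ (p : H → ℝ), (∀ h, 0 ≤ p h) → (∑ h, p h) = 1 →
      Finset.univ.inf' Finset.univ_nonempty (fun h => f p (pol (A p) h) h) ≥
        α * Finset.univ.sup' Finset.univ_nonempty (fun π =>
          Finset.univ.inf' Finset.univ_nonempty (fun h => f p (pol π h) h)))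
    (p0 p1 : H → ℝ)
    (hp0 : ∀ h, 0 ≤ p0 h) (hp0sum : (∑ h, p0 h) = 1)
    (hp1 : ∀ h, 0 ≤ p1 h) (hp1sum : (∑ h, p1 h) = 1) :
    Finset.univ.inf' Finset.univ_nonempty (fun h => f p0 (pol (A p1) h) h) ≥
      α * Finset.univ.sup' Finset.univ_nonempty (fun π =>
        Finset.univ.inf' Finset.univ_nonempty (fun h => f p0 (pol π h) h))
      - (α + 1) * L * ∑ h, |p1 h - p0 h| := by
  have hclose : ∀ (π : P) (h : H),
      |f p0 (pol π h) h - f p1 (pol π h) h| ≤ L * ∑ h', |p1 h' - p0 h'| := by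
    intro π h
    simpa only [abs_sub_comm (p0 _)] using hLip p0 p1 hp0 hp0sum hp1 hp1sum (pol π h) h
  rw [mul_assoc]
  exact approx_maxMin_of_abs_sub_le hα.le hclose (hA p1 hp1 hp1sum)

theorem stmt6 {H X P : Type*} [Fintype H] [Nonempty H] [Fintype X] [Fintype P] [Nonempty P]
    (f : (H → ℝ) → Finset X → H → ℝ) (L α : ℝ)
    (pol : P → H → Finset X)
    (hα : 0 < α) (hα1 : α ≤ 1)
    (hNonneg : ∀ (p : H → ℝ), (∀ h, 0 ≤ p h) → (∑ h, p h) = 1 →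
      ∀ (S : Finset X) (h : H), 0 ≤ f p S h)
    (hLip : ∀ (p p' : H → ℝ), (∀ h, 0 ≤ p h) → (∑ h, p h) = 1 →
      (∀ h, 0 ≤ p' h) → (∑ h, p' h) = 1 →
      ∀ (S : Finset X) (h : H),
        |f p S h - f p' S h| ≤ L * ∑ h', |p h' - p' h'|)
    (A : (H → ℝ) → P)
    (hA : ∀ (p : H → ℝ), (∀ h, 0 ≤ p h) → (∑ h, p h) = 1 →
      Finset.univ.inf' Finset.univ_nonempty (fun h => f p (pol (A p) h) h) ≥
        α * Finset.univ.sup' Finset.univ_nonempty (fun π =>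
          Finset.univ.inf' Finset.univ_nonempty (fun h => f p (pol π h) h)))
    (p0 p1 : H → ℝ)
    (hp0 : ∀ h, 0 ≤ p0 h) (hp0sum : (∑ h, p0 h) = 1)
    (hp1 : ∀ h, 0 ≤ p1 h) (hp1sum : (∑ h, p1 h) = 1) :
    Finset.univ.inf' Finset.univ_nonempty (fun h => f p0 (pol (A p1) h) h) ≥
      α * Finset.univ.sup' Finset.univ_nonempty (fun π =>
        Finset.univ.inf' Finset.univ_nonempty (fun h => f p0 (pol π h) h))
      - (α + 1) * L * ∑ h, |p1 h - p0 h| :=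
  stmt6_general f L α pol hα hLip A hA p0 p1 hp0 hp0sum hp1 hp1sum
end

section
/- If A satisfies W(p, A(p)) ≥ (1−1/e)·max_π W(p,π) for every prior p, where W uses the version space reduction utility, then for any true prior p0 and any perturbed prior p1: W(p0, A(p1)) ≥ (1−1/e)·max_π W(p0,π) − (2 − 1/e)·‖p1−p0‖. -/
/-!
Changing the prior by `d = ‖p₁ - p₀‖₁` moves every version space reduction value by at most `d`,
hence moves the worst-case value `W(·, π)` of every policy and the optimum `max_π W(·, π)` by at
most `d`. An `α`-approximate maximiser for `p₁` therefore loses `d` when evaluated under `p₀`,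
and the optimum it is compared with loses another `α d`, for a total of `(1 + α) d` with
`α = 1 - 1/e`.
-/

open Finset

namespace Finset

variable {ι α : Type*} [AddCommGroup α] [LinearOrder α] [IsOrderedAddMonoid α]
  {s : Finset ι} (H : s.Nonempty) {F G : ι → α} {d : α}

theorem inf'_le_inf'_add (h : ∀ i ∈ s, F i ≤ G i + d) : s.inf' H F ≤ s.inf' H G + d :=
  sub_le_iff_le_add.1 <| le_inf' _ _ fun i hi =>
    sub_le_iff_le_add.2 <| (inf'_le _ hi).trans (h i hi)

theorem sup'_le_sup'_add_s7 (h : ∀ i ∈ s, F i ≤ G i + d) : s.sup' H F ≤ s.sup' H G + d :=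
  sup'_le _ _ fun i hi => (h i hi).trans <| add_le_add_left (le_sup' _ hi) d

theorem abs_inf'_sub_inf'_le (h : ∀ i ∈ s, |F i - G i| ≤ d) :
    |s.inf' H F - s.inf' H G| ≤ d := by
  have hFG := inf'_le_inf'_add H (F := F) (G := G) fun i hi =>
    sub_le_iff_le_add'.1 (abs_sub_le_iff.1 (h i hi)).1
  have hGF := inf'_le_inf'_add H (F := G) (G := F) fun i hi =>
    sub_le_iff_le_add'.1 (abs_sub_le_iff.1 (h i hi)).2
  exact abs_sub_le_iff.2 ⟨sub_le_iff_le_add'.2 hFG, sub_le_iff_le_add'.2 hGF⟩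

theorem abs_sum_sub_sum_le_sum_abs_sub [Fintype ι] (s : Finset ι) (F G : ι → α) :
    |∑ i ∈ s, F i - ∑ i ∈ s, G i| ≤ ∑ i, |F i - G i| := by
  rw [← sum_sub_distrib]
  exact (abs_sum_le_sum_abs _ _).trans (sum_le_univ_sum_of_nonneg fun _ => abs_nonneg _)

end Finset

theorem le_apply_of_le_apply_of_abs_sub_le {ι : Type*} {s : Finset ι} (H : s.Nonempty)
    {F G : ι → ℝ} {α d : ℝ} (hα : 0 ≤ α) (hFG : ∀ i ∈ s, |F i - G i| ≤ d) {a : ι}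
    (ha : α * s.sup' H G ≤ G a) (has : a ∈ s) :
    α * s.sup' H F - (1 + α) * d ≤ F a := by
  have hsup : s.sup' H F ≤ s.sup' H G + d :=
    sup'_le_sup'_add_s7 H fun i hi => by linarith [(abs_sub_le_iff.1 (hFG i hi)).1]
  have hGa : G a ≤ F a + d := by linarith [(abs_sub_le_iff.1 (hFG a has)).2]
  linarith [mul_le_mul_of_nonneg_left hsup hα]

theorem stmt7_general {X Y P : Type*} [Fintype X] [Fintype Y] [DecidableEq X] [DecidableEq Y]
    [Nonempty Y] [Fintype P] [Nonempty P]
    (pol : P → (X → Y) → Finset X)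
    (f : ((X → Y) → ℝ) → Finset X → (X → Y) → ℝ)
    (hf : ∀ p S h, f p S h =
      1 - ∑ h' ∈ Finset.univ.filter (fun h' : X → Y => ∀ s ∈ S, h' s = h s), p h')
    (A : ((X → Y) → ℝ) → P)
    (hA : ∀ (p : (X → Y) → ℝ), (∀ h, 0 ≤ p h) → (∑ h, p h) = 1 →
      Finset.univ.inf' Finset.univ_nonempty (fun h => f p (pol (A p) h) h) ≥
        (1 - 1 / Real.exp 1) * Finset.univ.sup' Finset.univ_nonempty (fun π =>
          Finset.univ.inf' Finset.univ_nonempty (fun h => f p (pol π h) h)))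
    (p0 p1 : (X → Y) → ℝ)
    (hp1 : ∀ h, 0 ≤ p1 h) (hp1sum : (∑ h, p1 h) = 1) :
    Finset.univ.inf' Finset.univ_nonempty (fun h => f p0 (pol (A p1) h) h) ≥
      (1 - 1 / Real.exp 1) * Finset.univ.sup' Finset.univ_nonempty (fun π =>
        Finset.univ.inf' Finset.univ_nonempty (fun h => f p0 (pol π h) h))
      - (2 - 1 / Real.exp 1) * ∑ h, |p1 h - p0 h| := by
  have hf_lip : ∀ S h, |f p0 S h - f p1 S h| ≤ ∑ h, |p1 h - p0 h| := fun S h => by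
    rw [hf, hf, sub_sub_sub_cancel_left]
    exact abs_sum_sub_sum_le_sum_abs_sub _ _ _
  have hα : (0 : ℝ) ≤ 1 - 1 / Real.exp 1 := by
    rw [sub_nonneg, one_div]
    exact inv_le_one_of_one_le₀ (Real.one_le_exp zero_le_one)
  rw [show (2 : ℝ) - 1 / Real.exp 1 = 1 + (1 - 1 / Real.exp 1) by ring]
  exact le_apply_of_le_apply_of_abs_sub_le univ_nonempty hα
    (fun π _ => abs_inf'_sub_inf'_le _ fun h _ => hf_lip _ h) (hA p1 hp1 hp1sum) (mem_univ _)

theorem stmt7 {X Y P : Type*} [Fintype X] [Fintype Y] [DecidableEq X] [DecidableEq Y]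
    [Nonempty Y] [Fintype P] [Nonempty P]
    (pol : P → (X → Y) → Finset X)
    (f : ((X → Y) → ℝ) → Finset X → (X → Y) → ℝ)
    (hf : ∀ p S h, f p S h =
      1 - ∑ h' ∈ Finset.univ.filter (fun h' : X → Y => ∀ s ∈ S, h' s = h s), p h')
    (A : ((X → Y) → ℝ) → P)
    (hA : ∀ (p : (X → Y) → ℝ), (∀ h, 0 ≤ p h) → (∑ h, p h) = 1 →
      Finset.univ.inf' Finset.univ_nonempty (fun h => f p (pol (A p) h) h) ≥
        (1 - 1 / Real.exp 1) * Finset.univ.sup' Finset.univ_nonempty (fun π =>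
          Finset.univ.inf' Finset.univ_nonempty (fun h => f p (pol π h) h)))
    (p0 p1 : (X → Y) → ℝ)
    (hp0 : ∀ h, 0 ≤ p0 h) (hp0sum : (∑ h, p0 h) = 1)
    (hp1 : ∀ h, 0 ≤ p1 h) (hp1sum : (∑ h, p1 h) = 1) :
    Finset.univ.inf' Finset.univ_nonempty (fun h => f p0 (pol (A p1) h) h) ≥
      (1 - 1 / Real.exp 1) * Finset.univ.sup' Finset.univ_nonempty (fun π =>
        Finset.univ.inf' Finset.univ_nonempty (fun h => f p0 (pol π h) h))
      - (2 - 1 / Real.exp 1) * ∑ h, |p1 h - p0 h| :=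
  stmt7_general pol f hf A hA p0 p1 hp1 hp1sum
end

section
/- If A satisfies T(p,A(p)) ≥ (1−1/e)·max_π T(p,π) for every prior p, where T(p,π) = min_h t_p(x^π_h,h) is the worst-case total generalized version space reduction with a loss bounded by m, then for any true prior p0 and perturbed prior p1: T(p0, A(p1)) ≥ (1−1/e)·max_π T(p0,π) − m(4 − 2/e)·‖p1−p0‖. -/
/-!
The worst-case reduction `t_p(S, h)` is a quadratic form in the prior `p` with coefficients in
`[0, m]`, hence `2m`-Lipschitz in `ℓ¹` on the simplex. A uniform additive perturbation moves a
finite minimum (over hypotheses) and a finite maximum (over policies) by at most the same amount.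
So `T(p₀, A p₁) ≥ T(p₁, A p₁) - 2mδ ≥ c · max T(p₁, ·) - 2mδ ≥ c · (max T(p₀, ·) - 2mδ) - 2mδ`
with `c = 1 - 1/e` and `δ = ‖p₁ - p₀‖₁`, and `2mc + 2m = m(4 - 2/e)`.
-/

open Finset

namespace Finset

variable {ι α : Type*} [LinearOrder α] [Add α] {s : Finset ι}

lemma inf'_le_inf'_add_s9 (hs : s.Nonempty) {f g : ι → α} {c : α} (h : ∀ i ∈ s, f i ≤ g i + c) :
    s.inf' hs f ≤ s.inf' hs g + c := by
  obtain ⟨i, hi, hgi⟩ := s.exists_mem_eq_inf' hs g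
  rw [hgi]
  exact (s.inf'_le f hi).trans (h i hi)

lemma sup'_le_sup'_add_s9 [AddRightMono α] (hs : s.Nonempty) {f g : ι → α} {c : α}
    (h : ∀ i ∈ s, f i ≤ g i + c) :
    s.sup' hs f ≤ s.sup' hs g + c :=
  s.sup'_le hs f fun i hi => (h i hi).trans (by gcongr; exact s.le_sup' g hi)

end Finset

lemma quadratic_form_le_add_of_sum_eq_one {ι : Type*} [Fintype ι] {m : ℝ} {w : ι → ι → ℝ}
    (hw0 : ∀ i j, 0 ≤ w i j) (hwm : ∀ i j, w i j ≤ m) {p q : ι → ℝ}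
    (hp : ∀ i, 0 ≤ p i) (hq : ∀ i, 0 ≤ q i) (hps : ∑ i, p i = 1) (hqs : ∑ i, q i = 1) :
    ∑ i, ∑ j, p i * w i j * p j ≤ ∑ i, ∑ j, q i * w i j * q j + 2 * m * ∑ i, |p i - q i| := by
  have hterm : ∀ i j, p i * w i j * p j - q i * w i j * q j ≤
      m * |p i - q i| * q j + p i * (m * |p j - q j|) := by
    intro i j
    have h₁ : (p i - q i) * w i j ≤ m * |p i - q i| := by
      nlinarith [le_abs_self (p i - q i), abs_nonneg (p i - q i), hw0 i j, hwm i j]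
    have h₂ : w i j * (p j - q j) ≤ m * |p j - q j| := by
      nlinarith [le_abs_self (p j - q j), abs_nonneg (p j - q j), hw0 i j, hwm i j]
    calc p i * w i j * p j - q i * w i j * q j
        = (p i - q i) * w i j * q j + p i * (w i j * (p j - q j)) := by ring
      _ ≤ m * |p i - q i| * q j + p i * (m * |p j - q j|) := by
        gcongr
        · exact hq j
        · exact hp i
  have hsum : ∑ i, ∑ j, (m * |p i - q i| * q j + p i * (m * |p j - q j|)) =
      2 * m * ∑ i, |p i - q i| := by
    simp only [sum_add_distrib, ← mul_sum, ← sum_mul, hps, hqs]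
    ring
  rw [← sub_le_iff_le_add', ← hsum, ← sum_sub_distrib]
  refine sum_le_sum fun i _ => ?_
  rw [← sum_sub_distrib]
  exact sum_le_sum fun j _ => hterm i j

lemma restricted_quadratic_form_le_add_of_sum_eq_one {ι : Type*} [Fintype ι] {m : ℝ} (hm : 0 ≤ m)
    {L : ι → ι → ℝ} (hL0 : ∀ i j, 0 ≤ L i j) (hLm : ∀ i j, L i j ≤ m)
    (c : ι → ι → Prop) [DecidableRel c] {p q : ι → ℝ}
    (hp : ∀ i, 0 ≤ p i) (hq : ∀ i, 0 ≤ q i) (hps : ∑ i, p i = 1) (hqs : ∑ i, q i = 1) :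
    ∑ i, ∑ j, (if c i j then p i * L i j * p j else 0) ≤
      ∑ i, ∑ j, (if c i j then q i * L i j * q j else 0) + 2 * m * ∑ i, |p i - q i| := by
  have hw : ∀ r : ι → ℝ, ∑ i, ∑ j, (if c i j then r i * L i j * r j else 0) =
      ∑ i, ∑ j, r i * (if c i j then L i j else 0) * r j := fun r => by
    simp only [mul_ite, ite_mul, mul_zero, zero_mul]
  rw [hw, hw]
  refine quadratic_form_le_add_of_sum_eq_one (fun i j => ?_) (fun i j => ?_) hp hq hps hqs
  · split_ifs
    exacts [hL0 i j, le_rfl]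
  · split_ifs
    exacts [hLm i j, hm]

lemma zero_le_one_sub_inv_exp_one : 0 ≤ 1 - 1 / Real.exp 1 := by
  rw [sub_nonneg, div_le_one (Real.exp_pos 1)]
  linarith [Real.add_one_le_exp (1 : ℝ)]

theorem stmt9_general {X Y P : Type*} [Fintype X] [Fintype Y] [DecidableEq X] [DecidableEq Y]
    [Nonempty Y] [Fintype P] [Nonempty P]
    (m : ℝ) (hm : 0 ≤ m)
    (L : (X → Y) → (X → Y) → ℝ)
    (hLnonneg : ∀ h h', 0 ≤ L h h') (hLbound : ∀ h h', L h h' ≤ m)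
    (pol : P → (X → Y) → Finset X)
    (t : ((X → Y) → ℝ) → Finset X → (X → Y) → ℝ)
    (ht : ∀ p S h, t p S h =
      ∑ h₁, ∑ h₂, if (¬ ∀ s ∈ S, h₁ s = h s) ∨ (¬ ∀ s ∈ S, h₂ s = h s) then
        p h₁ * L h₁ h₂ * p h₂ else 0)
    (A : ((X → Y) → ℝ) → P)
    (hA : ∀ (p : (X → Y) → ℝ), (∀ h, 0 ≤ p h) → (∑ h, p h) = 1 →
      Finset.univ.inf' Finset.univ_nonempty (fun h => t p (pol (A p) h) h) ≥
        (1 - 1 / Real.exp 1) * Finset.univ.sup' Finset.univ_nonempty (fun π =>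
          Finset.univ.inf' Finset.univ_nonempty (fun h => t p (pol π h) h)))
    (p0 p1 : (X → Y) → ℝ)
    (hp0 : ∀ h, 0 ≤ p0 h) (hp0sum : (∑ h, p0 h) = 1)
    (hp1 : ∀ h, 0 ≤ p1 h) (hp1sum : (∑ h, p1 h) = 1) :
    Finset.univ.inf' Finset.univ_nonempty (fun h => t p0 (pol (A p1) h) h) ≥
      (1 - 1 / Real.exp 1) * Finset.univ.sup' Finset.univ_nonempty (fun π =>
        Finset.univ.inf' Finset.univ_nonempty (fun h => t p0 (pol π h) h))
      - m * (4 - 2 / Real.exp 1) * ∑ h, |p1 h - p0 h| := by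
  set δ := ∑ h, |p1 h - p0 h|
  have hlip : ∀ p q : (X → Y) → ℝ, (∀ h, 0 ≤ p h) → (∀ h, 0 ≤ q h) → ∑ h, p h = 1 →
      ∑ h, q h = 1 → ∀ S h, t p S h ≤ t q S h + 2 * m * ∑ h, |p h - q h| := by
    intro p q hp hq hps hqs S h
    simp only [ht]
    exact restricted_quadratic_form_le_add_of_sum_eq_one hm hLnonneg hLbound _ hp hq hps hqs
  have hδ : ∑ h, |p0 h - p1 h| = δ := by simp only [δ, abs_sub_comm]
  have h01 : ∀ π, univ.inf' univ_nonempty (fun h => t p0 (pol π h) h) ≤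
      univ.inf' univ_nonempty (fun h => t p1 (pol π h) h) + 2 * m * δ := fun π =>
    inf'_le_inf'_add_s9 _ fun h _ => hδ ▸ hlip p0 p1 hp0 hp1 hp0sum hp1sum _ h
  have h10 : ∀ π, univ.inf' univ_nonempty (fun h => t p1 (pol π h) h) ≤
      univ.inf' univ_nonempty (fun h => t p0 (pol π h) h) + 2 * m * δ := fun π =>
    inf'_le_inf'_add_s9 _ fun h _ => hlip p1 p0 hp1 hp0 hp1sum hp0sum _ h
  have hsup := mul_le_mul_of_nonneg_left
    (sup'_le_sup'_add_s9 univ_nonempty fun π _ => h01 π) zero_le_one_sub_inv_exp_one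
  have hA1 := hA p1 hp1 hp1sum
  have hconst : (1 - 1 / Real.exp 1) * (2 * m * δ) + 2 * m * δ = m * (4 - 2 / Real.exp 1) * δ := by
    ring
  linarith [h10 (A p1)]

theorem stmt9 {X Y P : Type*} [Fintype X] [Fintype Y] [DecidableEq X] [DecidableEq Y]
    [Nonempty Y] [Fintype P] [Nonempty P]
    (m : ℝ) (hm : 0 ≤ m)
    (L : (X → Y) → (X → Y) → ℝ)
    (hLnonneg : ∀ h h', 0 ≤ L h h') (hLbound : ∀ h h', L h h' ≤ m)
    (hLsymm : ∀ h h', L h h' = L h' h) (hLdiag : ∀ h, L h h = 0)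
    (pol : P → (X → Y) → Finset X)
    (t : ((X → Y) → ℝ) → Finset X → (X → Y) → ℝ)
    (ht : ∀ p S h, t p S h =
      ∑ h₁, ∑ h₂, if (¬ ∀ s ∈ S, h₁ s = h s) ∨ (¬ ∀ s ∈ S, h₂ s = h s) then
        p h₁ * L h₁ h₂ * p h₂ else 0)
    (A : ((X → Y) → ℝ) → P)
    (hA : ∀ (p : (X → Y) → ℝ), (∀ h, 0 ≤ p h) → (∑ h, p h) = 1 →
      Finset.univ.inf' Finset.univ_nonempty (fun h => t p (pol (A p) h) h) ≥
        (1 - 1 / Real.exp 1) * Finset.univ.sup' Finset.univ_nonempty (fun π =>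
          Finset.univ.inf' Finset.univ_nonempty (fun h => t p (pol π h) h)))
    (p0 p1 : (X → Y) → ℝ)
    (hp0 : ∀ h, 0 ≤ p0 h) (hp0sum : (∑ h, p0 h) = 1)
    (hp1 : ∀ h, 0 ≤ p1 h) (hp1sum : (∑ h, p1 h) = 1) :
    Finset.univ.inf' Finset.univ_nonempty (fun h => t p0 (pol (A p1) h) h) ≥
      (1 - 1 / Real.exp 1) * Finset.univ.sup' Finset.univ_nonempty (fun π =>
        Finset.univ.inf' Finset.univ_nonempty (fun h => t p0 (pol π h) h))
      - m * (4 - 2 / Real.exp 1) * ∑ h, |p1 h - p0 h| :=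
  stmt9_general m hm L hLnonneg hLbound pol t ht A hA p0 p1 hp0 hp0sum hp1 hp1sum
end

section
/- Let A be an α(p)-approximate algorithm for the minimum cost problem, p0 a prior with p0[h] > 0 for all h ∈ H, and p1 = (1/k)Σ_i p_{1,i} a uniform mixture with p0 one of the components. Then C(p0, A(p1)) ≤ α(p1)·((k−1)/min_h p0[h] + 1)·min_π C(p0,π). -/
/-! Both bounds come from pointwise domination of priors: `p0 ≤ k • p1`, because `p0` is one of the
`k` components of `p1`, and `p1 ≤ (1/k) (1 + (k - 1)/m) • p0` with `m = min p0`, because every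
other component is at most `1 ≤ p0 / m`. Domination `p ≤ t • q` gives `C(p, π) ≤ t C(q, π)` for
every policy, hence also for the minimal costs; chaining the first bound at `A p1`, the
approximation guarantee at `p1`, and the second bound on `min_π C(p1, π)` proves the theorem. -/

open Finset

section Domination

variable {H : Type*} [Fintype H]

theorem sum_mul_le_mul_sum_mul_of_le_mul {p q f : H → ℝ} {t : ℝ} (hf : ∀ h, 0 ≤ f h)
    (hpq : ∀ h, p h ≤ t * q h) : ∑ h, p h * f h ≤ t * ∑ h, q h * f h := by
  rw [mul_sum]
  refine sum_le_sum fun h _ => ?_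
  rw [← mul_assoc]
  exact mul_le_mul_of_nonneg_right (hpq h) (hf h)

theorem inf'_le_mul_inf'_of_le_mul {P : Type*} [Fintype P] [Nonempty P] {g g' : P → ℝ} {t : ℝ}
    (hg : ∀ π, g π ≤ t * g' π) :
    univ.inf' univ_nonempty g ≤ t * univ.inf' univ_nonempty g' := by
  obtain ⟨π, -, hπ⟩ := exists_mem_eq_inf' (univ_nonempty (α := P)) g'
  rw [hπ]
  exact (inf'_le g (mem_univ π)).trans (hg π)

theorem le_one_of_sum_eq_one {p : H → ℝ} (hp : ∀ h, 0 ≤ p h) (hsum : ∑ h, p h = 1) (h : H) :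
    p h ≤ 1 :=
  hsum ▸ single_le_sum (fun h _ => hp h) (mem_univ h)

end Domination

theorem sum_le_add_card_sub_one {ι : Type*} [Fintype ι] [DecidableEq ι] {x : ι → ℝ}
    (hx : ∀ i, x i ≤ 1) (j : ι) : ∑ i, x i ≤ x j + (Fintype.card ι - 1) := by
  rw [← add_sum_erase _ _ (mem_univ j)]
  gcongr
  calc ∑ i ∈ univ.erase j, x i ≤ #(univ.erase j) • (1 : ℝ) :=
        sum_le_card_nsmul _ _ _ fun i _ => hx i
    _ = Fintype.card ι - 1 := by
        rw [card_erase_of_mem (mem_univ j), nsmul_one, card_univ,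
          Nat.cast_sub (Fintype.card_pos_iff.2 ⟨j⟩)]
        simp

section Mixture

variable {H : Type*} {k : ℕ} (pc : Fin k → H → ℝ)

noncomputable def mixture (h : H) : ℝ := 1 / (k : ℝ) * ∑ i, pc i h

theorem mixture_nonneg (hpc : ∀ i h, 0 ≤ pc i h) (h : H) : 0 ≤ mixture pc h := by
  have := sum_nonneg fun i (_ : i ∈ univ) => hpc i h
  unfold mixture
  positivity

theorem sum_mixture [Fintype H] (hk : 0 < k) (hpc : ∀ i, ∑ h, pc i h = 1) :
    ∑ h, mixture pc h = 1 := by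
  simp only [mixture]
  rw [← mul_sum, sum_comm, sum_congr rfl fun i _ => hpc i]
  simp [hk.ne']

theorem le_mul_mixture (hpc : ∀ i h, 0 ≤ pc i h) (j : Fin k) (h : H) :
    pc j h ≤ k * mixture pc h := by
  rw [mixture, ← mul_assoc, mul_one_div_cancel (Nat.cast_ne_zero.2 j.pos.ne'), one_mul]
  exact single_le_sum (fun i _ => hpc i h) (mem_univ j)

theorem mixture_le_mul {m : ℝ} (hm : 0 < m) (hle : ∀ i h, pc i h ≤ 1) (j : Fin k)
    (hmj : ∀ h, m ≤ pc j h) (h : H) :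
    mixture pc h ≤ 1 / (k : ℝ) * (1 + ((k : ℝ) - 1) / m) * pc j h := by
  have hk : (1 : ℝ) ≤ k := by exact_mod_cast j.pos
  have hother : (k : ℝ) - 1 ≤ ((k : ℝ) - 1) / m * pc j h := by
    rw [div_mul_eq_mul_div, le_div_iff₀ hm]
    exact mul_le_mul_of_nonneg_left (hmj h) (by linarith)
  calc mixture pc h ≤ 1 / (k : ℝ) * (pc j h + ((k : ℝ) - 1)) := by
        unfold mixture
        gcongr
        simpa using sum_le_add_card_sub_one (fun i => hle i h) j
    _ ≤ 1 / (k : ℝ) * (1 + ((k : ℝ) - 1) / m) * pc j h := by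
        rw [mul_assoc]
        gcongr
        linarith

end Mixture

theorem stmt15_general {H P : Type*} [Fintype H] [Nonempty H] [Fintype P] [Nonempty P]
    (c : P → H → ℝ) (hc : ∀ π h, 0 ≤ c π h)
    (α : (H → ℝ) → ℝ) (hα : ∀ p, 1 ≤ α p)
    (A : (H → ℝ) → P)
    (hA : ∀ (p : H → ℝ), (∀ h, 0 ≤ p h) → (∑ h, p h) = 1 →
      (∑ h, p h * c (A p) h) ≤
        α p * Finset.univ.inf' Finset.univ_nonempty (fun π => ∑ h, p h * c π h))
    (k : ℕ)
    (pc : Fin k → H → ℝ)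
    (hpc : ∀ i, (∀ h, 0 ≤ pc i h) ∧ (∑ h, pc i h) = 1)
    (p0 p1 : H → ℝ)
    (hp1 : ∀ h, p1 h = (1 / (k : ℝ)) * ∑ i, pc i h)
    (j : Fin k) (hp0 : p0 = pc j)
    (hp0pos : ∀ h, 0 < p0 h) :
    (∑ h, p0 h * c (A p1) h) ≤
      α p1 * (((k : ℝ) - 1) / Finset.univ.inf' Finset.univ_nonempty p0 + 1) *
        Finset.univ.inf' Finset.univ_nonempty (fun π => ∑ h, p0 h * c π h) := by
  set m := univ.inf' univ_nonempty p0
  have hm : 0 < m := (lt_inf'_iff _).2 fun h _ => hp0pos h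
  have hpc_nonneg : ∀ i h, 0 ≤ pc i h := fun i => (hpc i).1
  have hk : (0 : ℝ) < k := by exact_mod_cast j.pos
  have hα0 : 0 ≤ α p1 := zero_le_one.trans (hα p1)
  obtain rfl : p1 = mixture pc := funext hp1
  subst hp0
  have hcomponent_le_mixture := sum_mul_le_mul_sum_mul_of_le_mul (hc (A (mixture pc)))
    (le_mul_mixture pc hpc_nonneg j)
  have hguarantee := hA _ (mixture_nonneg pc hpc_nonneg) (sum_mixture pc j.pos fun i => (hpc i).2)
  have hmin_mixture_le := inf'_le_mul_inf'_of_le_mul fun π => sum_mul_le_mul_sum_mul_of_le_mul (hc π)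
    (mixture_le_mul pc hm (fun i => le_one_of_sum_eq_one (hpc i).1 (hpc i).2) j
      fun h => inf'_le _ (mem_univ h))
  calc _ ≤ (k : ℝ) * (α (mixture pc) * (1 / (k : ℝ) * (1 + ((k : ℝ) - 1) / m) *
        univ.inf' univ_nonempty fun π => ∑ h, pc j h * c π h)) :=
        hcomponent_le_mixture.trans (mul_le_mul_of_nonneg_left
          (hguarantee.trans (mul_le_mul_of_nonneg_left hmin_mixture_le hα0)) hk.le)
    _ = _ := by field_simp; ring

theorem stmt15 {H P : Type*} [Fintype H] [Nonempty H] [Fintype P] [Nonempty P]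
    (c : P → H → ℝ) (hc : ∀ π h, 0 ≤ c π h)
    (α : (H → ℝ) → ℝ) (hα : ∀ p, 1 ≤ α p)
    (A : (H → ℝ) → P)
    (hA : ∀ (p : H → ℝ), (∀ h, 0 ≤ p h) → (∑ h, p h) = 1 →
      (∑ h, p h * c (A p) h) ≤
        α p * Finset.univ.inf' Finset.univ_nonempty (fun π => ∑ h, p h * c π h))
    (k : ℕ) (hk : 0 < k)
    (pc : Fin k → H → ℝ)
    (hpc : ∀ i, (∀ h, 0 ≤ pc i h) ∧ (∑ h, pc i h) = 1)
    (p0 p1 : H → ℝ)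
    (hp1 : ∀ h, p1 h = (1 / (k : ℝ)) * ∑ i, pc i h)
    (j : Fin k) (hp0 : p0 = pc j)
    (hp0pos : ∀ h, 0 < p0 h) :
    (∑ h, p0 h * c (A p1) h) ≤
      α p1 * (((k : ℝ) - 1) / Finset.univ.inf' Finset.univ_nonempty p0 + 1) *
        Finset.univ.inf' Finset.univ_nonempty (fun π => ∑ h, p0 h * c π h) :=
  stmt15_general c hc α hα A hA k pc hpc p0 p1 hp1 j hp0 hp0pos
end

section
/- For the non-Lipschitz counting utility f_p(S,h) = |{h' : p[h'] > 0 and h'(S) ≠ h(S)}| on a 4-hypothesis, 2-example instance, exact algorithms on perturbed priors fail to be robust: for every C, α, ε > 0 there is a perturbed prior p1 with 0 < ‖p1 − p0‖ < ε and a policy π1 that is optimal for the average-case objective under p1, yet F(p0, π1) < α·max_π F(p0,π) − C·‖p1−p0‖. -/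
open Finset

/-- The counting utility: number of hypotheses with positive prior probability that
disagree with `h` on some example in `S`. -/
noncomputable def cntUtil (p : (Fin 2 → Fin 2) → ℝ) (S : Finset (Fin 2))
    (h : Fin 2 → Fin 2) : ℝ :=
  ((Finset.univ.filter (fun h' : Fin 2 → Fin 2 => 0 < p h' ∧ ∃ s ∈ S, h' s ≠ h s)).card : ℝ)

/-- Average-case objective of the policy querying example `i` (budget 1). -/
noncomputable def cntF (p : (Fin 2 → Fin 2) → ℝ) (i : Fin 2) : ℝ :=
  ∑ h : Fin 2 → Fin 2, p h * cntUtil p ({i} : Finset (Fin 2)) h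

/-- The true prior: probability 1/2 on each of the two hypotheses labeling `x1` with 0. -/
noncomputable def cntP0 : (Fin 2 → Fin 2) → ℝ :=
  fun h => if h 1 = 0 then 1 / 2 else 0

open Filter Topology

/-! Under the true prior only the two hypotheses with `h 1 = 0` carry mass, so querying `x1`
separates nothing (`cntF cntP0 1 = 0`), while querying `x0` earns `1`. As soon as a perturbation
gives every hypothesis positive mass, the counting utility jumps to `2` for either query, so
querying `x1` becomes optimal however small the perturbation is: the utility is discontinuous in
the prior, and no bound of the form α · OPT − C · ‖p1 − p0‖ survives. -/

lemma sum_fin_two_fun {M : Type*} [AddCommMonoid M] (f : (Fin 2 → Fin 2) → M) :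
    ∑ h, f h = f ![0, 0] + f ![0, 1] + f ![1, 0] + f ![1, 1] := by
  have huniv : (univ : Finset (Fin 2 → Fin 2)) = {![0, 0], ![0, 1], ![1, 0], ![1, 1]} := by
    decide
  rw [huniv, sum_insert (by decide), sum_insert (by decide), sum_insert (by decide),
    sum_singleton, add_assoc, add_assoc]

lemma card_filter_apply_ne (i : Fin 2) (h : Fin 2 → Fin 2) :
    #{h' : Fin 2 → Fin 2 | h' i ≠ h i} = 2 := by
  revert i h; decide

lemma card_filter_apply_one_eq_zero_and_apply_zero_ne (a : Fin 2) :
    #{h' : Fin 2 → Fin 2 | h' 1 = 0 ∧ h' 0 ≠ a} = 1 := by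
  revert a; decide

lemma cntUtil_singleton_of_pos {p : (Fin 2 → Fin 2) → ℝ} (hp : ∀ h, 0 < p h) (i : Fin 2)
    (h : Fin 2 → Fin 2) : cntUtil p {i} h = 2 := by
  simp [cntUtil, hp, card_filter_apply_ne]

lemma cntF_of_pos {p : (Fin 2 → Fin 2) → ℝ} (hp : ∀ h, 0 < p h) (hsum : ∑ h, p h = 1)
    (i : Fin 2) : cntF p i = 2 := by
  simp [cntF, cntUtil_singleton_of_pos hp, ← sum_mul, hsum]

lemma cntUtil_cntP0 (S : Finset (Fin 2)) (h : Fin 2 → Fin 2) :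
    cntUtil cntP0 S h = #{h' : Fin 2 → Fin 2 | h' 1 = 0 ∧ ∃ s ∈ S, h' s ≠ h s} := by
  unfold cntUtil
  congr 3 with h'
  by_cases h1 : h' 1 = 0 <;> simp [cntP0, h1]

lemma cntF_cntP0_zero : cntF cntP0 0 = 1 := by
  norm_num [cntF, cntUtil_cntP0, sum_fin_two_fun, cntP0,
    card_filter_apply_one_eq_zero_and_apply_zero_ne]

lemma cntF_cntP0_one : cntF cntP0 1 = 0 := by
  simp [cntF, cntUtil_cntP0, sum_fin_two_fun, cntP0]

noncomputable def perturbedPrior (δ : ℝ) : (Fin 2 → Fin 2) → ℝ :=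
  fun h => if h 1 = 0 then 1 / 2 - δ else δ

lemma perturbedPrior_pos {δ : ℝ} (hδ : 0 < δ) (hδ' : δ < 1 / 2) (h : Fin 2 → Fin 2) :
    0 < perturbedPrior δ h := by
  unfold perturbedPrior
  split_ifs <;> linarith

lemma sum_perturbedPrior (δ : ℝ) : ∑ h, perturbedPrior δ h = 1 := by
  norm_num [sum_fin_two_fun, perturbedPrior]
  ring

lemma sum_abs_perturbedPrior_sub_cntP0 {δ : ℝ} (hδ : 0 ≤ δ) :
    ∑ h, |perturbedPrior δ h - cntP0 h| = 4 * δ := by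
  norm_num [sum_fin_two_fun, perturbedPrior, cntP0, abs_of_nonneg hδ]
  ring

lemma exists_small_pos (C : ℝ) {α ε : ℝ} (hα : 0 < α) (hε : 0 < ε) :
    ∃ δ : ℝ, 0 < δ ∧ δ < 1 / 2 ∧ 4 * δ < ε ∧ C * (4 * δ) < α := by
  have hsmall : ∀ᶠ δ in 𝓝 (0 : ℝ), δ < 1 / 2 ∧ 4 * δ < ε ∧ C * (4 * δ) < α := by
    refine (eventually_lt_nhds (by norm_num)).and (.and ?_ ?_)
    · exact (continuous_const.mul continuous_id).continuousAt.eventually_lt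
        continuousAt_const (by simpa)
    · exact (continuous_const.mul (continuous_const.mul continuous_id)).continuousAt.eventually_lt
        continuousAt_const (by simpa)
  obtain ⟨δ, hδ, hδ_pos⟩ := ((hsmall.filter_mono nhdsWithin_le_nhds).and
    (self_mem_nhdsWithin : ∀ᶠ δ in 𝓝[>] (0 : ℝ), δ ∈ Set.Ioi 0)).exists
  exact ⟨δ, hδ_pos, hδ⟩

theorem stmt17 :
    ∀ C α ε : ℝ, 0 < C → 0 < α → 0 < ε →
      ∃ p1 : (Fin 2 → Fin 2) → ℝ,
        (∀ h, 0 ≤ p1 h) ∧ (∑ h, p1 h) = 1 ∧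
        0 < (∑ h, |p1 h - cntP0 h|) ∧ (∑ h, |p1 h - cntP0 h|) < ε ∧
        (∀ i : Fin 2, cntF p1 1 ≥ cntF p1 i) ∧
        cntF cntP0 1 < α * max (cntF cntP0 0) (cntF cntP0 1)
          - C * (∑ h, |p1 h - cntP0 h|) := by
  intro C α ε _ hα hε
  obtain ⟨δ, hδ, hδ_half, hδε, hδα⟩ := exists_small_pos C hα hε
  have hpos := perturbedPrior_pos hδ hδ_half
  have hdist := sum_abs_perturbedPrior_sub_cntP0 hδ.le
  refine ⟨perturbedPrior δ, fun h => (hpos h).le, sum_perturbedPrior δ, ?_, ?_, ?_, ?_⟩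
  · rw [hdist]; positivity
  · rwa [hdist]
  · intro i
    exact ((cntF_of_pos hpos (sum_perturbedPrior δ) 1).trans
      (cntF_of_pos hpos (sum_perturbedPrior δ) i).symm).ge
  · rw [hdist, cntF_cntP0_zero, cntF_cntP0_one, max_eq_left zero_le_one]
    linarith
end
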